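/- arXiv:2212.01626 — 2 statements merged into one kernel-verified Lean document; each statement's English description precedes it below -/
import Mathlib

section
/- The differentiation operator D is antiselfadjoint with respect to the Euler form: for all f, g ∈ V_n, χ_n(f′, g) + χ_n(f, g′) = 0. -/
open Polynomial Finset

/-- `V n`: the real vector space of polynomials in `ℝ[t]` of degree at most `n`. -/
noncomputable def V (n : ℕ) : Submodule ℝ ℝ[X] := Polynomial.degreeLT ℝ (n + 1)

/-- Differentiation `D : V_n → V_n`. -/
noncomputable def Dop (n : ℕ) : Module.End ℝ (V n) :=
  (Polynomial.derivative (R := ℝ)).restrict (p := V n) (q := V n) fun p hp => by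
    rw [V, Polynomial.mem_degreeLT] at hp ⊢
    exact lt_of_le_of_lt Polynomial.degree_derivative_le hp

/-- `γ_m(t) = (t+1)(t+2)⋯(t+m)/m!`. -/
noncomputable def gam (m : ℕ) : ℝ[X] :=
  Polynomial.C ((m.factorial : ℝ))⁻¹ *
    ∏ i ∈ Finset.range m, (Polynomial.X + Polynomial.C (i + 1 : ℝ))

/-- `χ` is the Euler form: the (unique) bilinear form on `V n` with
`χ(γ_n(t+i), γ_n(t+j)) = C(n+j-i, n)` for `0 ≤ i, j ≤ n` (binomial coefficient,
equal to `0` when `n+j-i < n`). -/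
def EulerCond (n : ℕ) (χ : ↥(V n) →ₗ[ℝ] ↥(V n) →ₗ[ℝ] ℝ) : Prop :=
  ∀ (i j : Fin (n + 1)) (f g : V n),
    (f : ℝ[X]) = (gam n).comp (Polynomial.X + Polynomial.C ((i : ℕ) : ℝ)) →
    (g : ℝ[X]) = (gam n).comp (Polynomial.X + Polynomial.C ((j : ℕ) : ℝ)) →
    χ f g = ((n + (j : ℕ) - (i : ℕ)).choose n : ℝ)



lemma monic_prodP (m : ℕ) : (∏ i ∈ Finset.range m, (X + C (i + 1 : ℝ))).Monic :=
  monic_prod_of_monic _ _ (fun i _ => monic_X_add_C _)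

lemma natDegree_prodP (m : ℕ) : (∏ i ∈ Finset.range m, (X + C (i + 1 : ℝ))).natDegree = m := by
  rw [natDegree_prod_of_monic _ _ (fun i _ => monic_X_add_C _)]
  simp only [natDegree_X_add_C]
  simp

lemma gam_natDegree_le (m : ℕ) : (gam m).natDegree ≤ m :=
  le_trans (natDegree_C_mul_le _ _) (le_of_eq (natDegree_prodP m))

lemma gam_coeff_top (m : ℕ) : (gam m).coeff m = ((m.factorial : ℝ))⁻¹ := by
  rw [gam, coeff_C_mul]
  have h := (monic_prodP m).coeff_natDegree
  rw [natDegree_prodP] at h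
  rw [h, mul_one]

lemma gam_degree_lt (m : ℕ) : (gam m).degree < ((m+1 : ℕ) : WithBot ℕ) := by
  refine lt_of_le_of_lt (degree_le_of_natDegree_le (gam_natDegree_le m)) ?_
  exact_mod_cast Nat.lt_succ_self m


-- comp with X + C c preserves degree-bounds
lemma degree_comp_X_add_C_le (p : ℝ[X]) (c : ℝ) : (p.comp (X + C c)).degree ≤ p.degree := by
  rcases eq_or_ne p 0 with rfl | hp
  · simp
  have hne : p.comp (X + C c) ≠ 0 := by
    rw [show p.comp (X + C c) = taylor c p from rfl]
    simpa using fun h => hp (taylor_injective c (by simpa using h))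
  rw [degree_eq_natDegree hne, degree_eq_natDegree hp]
  exact_mod_cast (by rw [natDegree_comp, natDegree_X_add_C, mul_one] : (p.comp (X + C c)).natDegree ≤ p.natDegree)

lemma comp_mem_V {n : ℕ} {p : ℝ[X]} (hp : p ∈ V n) (c : ℝ) : p.comp (X + C c) ∈ V n := by
  rw [V, Polynomial.mem_degreeLT] at hp ⊢
  exact lt_of_le_of_lt (degree_comp_X_add_C_le p c) hp

-- the shift operator
noncomputable def S : ℝ[X] →ₗ[ℝ] ℝ[X] := (Polynomial.aeval (X + C (1:ℝ))).toLinearMap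

lemma S_apply (p : ℝ[X]) : S p = p.comp (X + C 1) := by
  simp [S, aeval_def, Polynomial.comp]

lemma S_pow_apply (k : ℕ) (p : ℝ[X]) : (S^k) p = p.comp (X + C (k:ℝ)) := by
  induction k with
  | zero => simp
  | succ k ih =>
    rw [pow_succ', Module.End.mul_apply, ih, S_apply, comp_assoc]
    congr 1
    push_cast
    simp [add_comp]
    ring


lemma degree_sub_S_lt (p : ℝ[X]) (m : ℕ) (hp : p.degree < ((m+1:ℕ) : WithBot ℕ)) :
    (p - S p).degree < (m : WithBot ℕ) := by
  rcases eq_or_ne p 0 with rfl | hp0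
  · simp only [map_zero, sub_zero, degree_zero]
    exact_mod_cast WithBot.bot_lt_coe (α := ℕ) m
  rcases eq_or_ne p.natDegree 0 with h0 | h0
  · obtain ⟨a, rfl⟩ := natDegree_eq_zero.mp h0
    rw [S_apply, C_comp, sub_self, degree_zero]
    exact_mod_cast WithBot.bot_lt_coe (α := ℕ) m
  have hdeg : (S p).degree = p.degree := by
    refine le_antisymm (by rw [S_apply]; exact degree_comp_X_add_C_le p 1) ?_
    have h2 := degree_comp_X_add_C_le (p.comp (X + C 1)) (-1)
    rw [comp_assoc] at h2
    simpa [add_comp, add_assoc] using h2.trans_eq (by rw [S_apply])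
  have hlc : (S p).leadingCoeff = p.leadingCoeff := by
    rw [S_apply, leadingCoeff_comp (by rw [natDegree_X_add_C]; exact one_ne_zero)]
    have h1 : (X + C (1:ℝ)).leadingCoeff = 1 := (monic_X_add_C (1:ℝ))
    rw [h1, one_pow, mul_one]
  have hlt := degree_sub_lt hdeg.symm hp0 hlc.symm
  calc (p - S p).degree < p.degree := hlt
    _ ≤ (m : WithBot ℕ) := by
        rw [degree_eq_natDegree hp0] at hp ⊢
        exact_mod_cast Nat.lt_succ_iff.mp (by exact_mod_cast hp)

lemma one_sub_S_pow_eq_zero (m : ℕ) (p : ℝ[X]) (hp : p.degree < (m : WithBot ℕ)) :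
    ((1 - S)^m) p = 0 := by
  induction m generalizing p with
  | zero =>
    have hz : p = 0 := by
      refine degree_eq_bot.mp (Nat.WithBot.lt_zero_iff.mp ?_)
      exact_mod_cast hp
    simp [hz]
  | succ m ih =>
    rw [pow_succ, Module.End.mul_apply]
    have h1 : (1 - S) p = p - S p := by simp [LinearMap.sub_apply]
    rw [h1]
    exact ih _ (degree_sub_S_lt p m hp)

lemma fd_sum (m : ℕ) (p : ℝ[X]) (hp : p.degree < (m : WithBot ℕ)) :
    ∑ k ∈ range (m+1), ((-1:ℝ)^k * ((m.choose k : ℕ):ℝ)) • p.comp (X + C (k:ℝ)) = 0 := by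
  have hc : Commute (-S) (1 : Module.End ℝ ℝ[X]) := Commute.one_right _
  have hexp : ((1:Module.End ℝ ℝ[X]) - S)^m
      = ∑ k ∈ range (m+1), (-S)^k * 1^(m-k) * (m.choose k : Module.End ℝ ℝ[X]) := by
    rw [sub_eq_add_neg, add_comm]
    exact hc.add_pow m
  have h0 := one_sub_S_pow_eq_zero m p hp
  rw [hexp, LinearMap.sum_apply] at h0
  rw [← h0]
  refine Finset.sum_congr rfl ?_
  intro k hk
  have hneg : (-S)^k = ((-1:ℝ)^k) • (S^k) := by
    rw [show -S = (-1:ℝ) • S by module, _root_.smul_pow]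
  have hnat : ((m.choose k : ℕ) : Module.End ℝ ℝ[X]) p = (m.choose k : ℕ) • p := by
    simp [Module.End.natCast_apply]
  rw [one_pow, mul_one, Module.End.mul_apply, hneg, hnat, LinearMap.smul_apply, map_nsmul,
    S_pow_apply, smul_comm, mul_smul, ← Nat.cast_smul_eq_nsmul ℝ]
  rw [smul_comm]


lemma eval_gam (m : ℕ) (x : ℝ) :
    eval x (gam m) = (m.factorial:ℝ)⁻¹ * ∏ k ∈ range m, (x + (k+1)) := by
  simp [gam, eval_prod]

lemma prod_asc (d : ℕ) : ∀ m : ℕ, ∏ k ∈ range m, (d+k+1) = (d+1).ascFactorial m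
  | 0 => by simp
  | (m+1) => by
    rw [Finset.prod_range_succ, prod_asc d m, Nat.ascFactorial_succ]
    ring

lemma val_eq (n i j : ℕ) (hi : i ≤ n) :
    ((n + j - i).choose n : ℝ) = eval ((j:ℝ) - (i:ℝ)) (gam n) := by
  rw [eval_gam]
  rcases le_or_gt i j with h | h
  · set d := j - i with hd
    have hjd : (j:ℝ) - (i:ℝ) = (d:ℝ) := by
      rw [hd]; push_cast [Nat.cast_sub h]; ring
    rw [hjd]
    have hprod : ∏ k ∈ range n, ((d:ℝ) + (k+1)) = ((∏ k ∈ range n, (d+k+1) : ℕ) : ℝ) := by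
      push_cast; apply Finset.prod_congr rfl; intros; ring
    rw [hprod, prod_asc, Nat.ascFactorial_eq_factorial_mul_choose]
    have hnji : n + j - i = d + n := by omega
    rw [hnji]
    push_cast
    rw [← mul_assoc, inv_mul_cancel₀ (by exact_mod_cast n.factorial_ne_zero), one_mul]
  · have h1 : (n + j - i).choose n = 0 := Nat.choose_eq_zero_of_lt (by omega)
    have h2 : ∏ k ∈ range n, ((j:ℝ) - i + (k+1)) = 0 := by
      apply Finset.prod_eq_zero (i := i - j - 1) (Finset.mem_range.mpr (by omega))
      push_cast [Nat.cast_sub (show 1 ≤ i - j by omega), Nat.cast_sub (show j ≤ i by omega)]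
      ring
    rw [h1, h2, mul_zero, Nat.cast_zero]



-- the Δ identity
lemma XCC (a b : ℝ) : X + C a + C b = X + C (a + b) := by rw [add_assoc, ← C_add]

lemma delta_gam (n : ℕ) :
    (gam (n+1)).comp (X + C 1) - gam (n+1) = (gam n).comp (X + C 1) := by
  have key : ∀ (m : ℕ) (c : ℝ), (∏ i ∈ range m, (X + C (i + 1 : ℝ))).comp (X + C c)
      = ∏ i ∈ range m, (X + C ((i:ℝ) + 1 + c)) := by
    intro m c
    rw [Polynomial.prod_comp]
    refine Finset.prod_congr rfl fun i _ => ?_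
    rw [add_comp, X_comp, C_comp, XCC, add_comm c]
  simp only [gam]
  rw [mul_comp, C_comp, key, mul_comp, C_comp, key, ← mul_sub]
  have h1 : ∏ i ∈ range (n+1), (X + C ((i:ℝ) + 1 + 1)) =
      (∏ i ∈ range n, (X + C ((i:ℝ) + 1 + 1))) * (X + C ((n:ℝ) + 1 + 1)) :=
    Finset.prod_range_succ _ _
  have h2 : ∏ i ∈ range (n+1), (X + C ((i:ℝ) + 1)) =
      (X + C 1) * ∏ i ∈ range n, (X + C ((i:ℝ) + 1 + 1)) := by
    rw [Finset.prod_range_succ', mul_comm]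
    congr 1
    · norm_num
    · refine Finset.prod_congr rfl fun i _ => ?_
      push_cast
      ring_nf
  rw [h1, h2]
  have h3 : (∏ i ∈ range n, (X + C ((i:ℝ) + 1 + 1))) * (X + C ((n:ℝ) + 1 + 1))
      - (X + C 1) * ∏ i ∈ range n, (X + C ((i:ℝ) + 1 + 1))
      = C ((n:ℝ)+1) * ∏ i ∈ range n, (X + C ((i:ℝ) + 1 + 1)) := by
    rw [mul_comm (X + C 1), ← mul_sub, mul_comm (C ((n:ℝ)+1))]
    congr 1
    rw [add_sub_add_left_eq_sub, ← C_sub]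
    congr 1
    ring
  rw [h3, ← mul_assoc, ← C_mul]
  congr 2
  rw [Nat.factorial_succ]
  push_cast
  rw [mul_inv]
  have hne : ((n:ℝ) + 1) ≠ 0 := by positivity
  field_simp

lemma delta_gam_shift (n : ℕ) (c : ℝ) :
    (gam (n+1)).comp (X + C (c+1)) - (gam (n+1)).comp (X + C c)
      = (gam n).comp (X + C (c+1)) := by
  have h := congrArg (fun p => p.comp (X + C c)) (delta_gam n)
  simp only [sub_comp, comp_assoc] at h
  have hs : (X + C (1:ℝ)).comp (X + C c) = X + C (c + 1) := by
    rw [add_comp, X_comp, C_comp, XCC, add_comm c]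
  rw [hs] at h
  exact h

lemma gam_comp_coeff_top (m : ℕ) (c : ℝ) :
    ((gam m).comp (X + C c)).coeff m = ((m.factorial : ℝ))⁻¹ := by
  rw [gam, mul_comp, C_comp, coeff_C_mul]
  have hm : ((∏ i ∈ range m, (X + C (i + 1 : ℝ))).comp (X + C c)).Monic :=
    (monic_prodP m).comp (monic_X_add_C c) (by rw [natDegree_X_add_C]; exact one_ne_zero)
  have hd : ((∏ i ∈ range m, (X + C (i + 1 : ℝ))).comp (X + C c)).natDegree = m := by
    rw [natDegree_comp, natDegree_X_add_C, mul_one, natDegree_prodP]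
  have h2 := hm.coeff_natDegree
  rw [hd] at h2
  rw [h2, mul_one]

lemma span_gam : ∀ (n : ℕ) (s : ℝ),
    Submodule.span ℝ ((fun k : ℕ => (gam n).comp (X + C (s + k))) '' Set.Iic n)
      = degreeLT ℝ (n+1) := by
  intro n
  induction n with
  | zero =>
    intro s
    have hg : gam 0 = 1 := by simp [gam]
    have himg : (fun k : ℕ => (gam 0).comp (X + C (s + k))) '' Set.Iic 0 = {1} := by
      rw [hg]
      ext p
      simp [Set.mem_image, one_comp]
    rw [himg]
    apply le_antisymm
    · rw [Submodule.span_le, Set.singleton_subset_iff]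
      rw [SetLike.mem_coe, mem_degreeLT]
      simpa using degree_one_le.trans_lt (by norm_num)
    · intro p hp
      rw [mem_degreeLT] at hp
      have : p = C (p.coeff 0) := eq_C_of_degree_le_zero (by
        exact Nat.WithBot.lt_one_iff_le_zero.mp (by exact_mod_cast hp))
      rw [this, show C (p.coeff 0) = p.coeff 0 • (1:ℝ[X]) by simp [smul_eq_C_mul]]
      exact Submodule.smul_mem _ _ (Submodule.subset_span rfl)
  | succ n ih =>
    intro s
    set F : ℕ → ℝ[X] := fun k => (gam (n+1)).comp (X + C (s + k)) with hF
    apply le_antisymm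
    · rw [Submodule.span_le]
      rintro p ⟨k, -, rfl⟩
      rw [SetLike.mem_coe, mem_degreeLT]
      exact lt_of_le_of_lt (degree_comp_X_add_C_le _ _) (gam_degree_lt (n+1))
    · intro f hf
      rw [mem_degreeLT] at hf
      set c : ℝ := ((n+1).factorial : ℝ) * f.coeff (n+1) with hc
      have hF0top : (F 0).coeff (n+1) = (((n+1).factorial : ℝ))⁻¹ := gam_comp_coeff_top (n+1) _
      set g : ℝ[X] := f - c • F 0 with hg
      have hgcoeff : g.coeff (n+1) = 0 := by
        rw [hg, coeff_sub, coeff_smul, hF0top, hc, smul_eq_mul]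
        field_simp
        simp
      have hgdeglt : g.degree < ((n+2:ℕ) : WithBot ℕ) := by
        apply lt_of_le_of_lt (degree_sub_le _ _)
        apply max_lt hf
        apply lt_of_le_of_lt (degree_smul_le _ _)
        exact lt_of_le_of_lt (degree_comp_X_add_C_le _ _) (gam_degree_lt (n+1))
      have hgdeg : g.degree < ((n+1:ℕ) : WithBot ℕ) := by
        rw [degree_lt_iff_coeff_zero] at hgdeglt ⊢
        intro m hm
        rcases eq_or_lt_of_le hm with rfl | hlt
        · exact hgcoeff
        · exact hgdeglt m (by exact_mod_cast hlt)
      have hgmem : g ∈ degreeLT ℝ (n+1) := mem_degreeLT.mpr hgdeg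
      rw [← ih (s+1)] at hgmem
      have hsub : Submodule.span ℝ ((fun k : ℕ => (gam n).comp (X + C ((s+1) + k))) '' Set.Iic n)
          ≤ Submodule.span ℝ (F '' Set.Iic (n+1)) := by
        rw [Submodule.span_le]
        rintro p ⟨k, hk, rfl⟩
        have hd := delta_gam_shift n (s + k)
        have harg : s + (k:ℝ) + 1 = (s+1) + k := by ring
        rw [harg] at hd
        show (gam n).comp (X + C (s + 1 + (k:ℝ))) ∈ _
        rw [← hd]
        refine Submodule.sub_mem _ ?_ ?_
        · refine Submodule.subset_span ⟨k+1, by simpa using Nat.succ_le_succ hk, ?_⟩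
          show (gam (n+1)).comp (X + C (s + ((k:ℕ)+1 : ℕ))) = _
          congr 2
          push_cast; ring
        · exact Submodule.subset_span ⟨k, Set.mem_Iic.mpr ((Set.mem_Iic.mp hk).trans (Nat.le_succ n)), rfl⟩
      have hfeq : f = g + c • F 0 := by rw [hg]; abel
      rw [hfeq]
      exact Submodule.add_mem _ (hsub hgmem) (Submodule.smul_mem _ _
        (Submodule.subset_span ⟨0, by simp, by simp [hF]⟩))

lemma gam_mem_V (n : ℕ) : gam n ∈ V n := by
  rw [V, Polynomial.mem_degreeLT]
  exact_mod_cast gam_degree_lt n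

noncomputable def eps (n k : ℕ) : V n :=
  ⟨(gam n).comp (X + C (k:ℝ)), comp_mem_V (gam_mem_V n) (k:ℝ)⟩

lemma I1 (n : ℕ) : ∑ k ∈ range (n+2), ((-1:ℝ)^k * (((n+1).choose k : ℕ):ℝ)) •
    (gam n).comp (X + C (k:ℝ)) = 0 := by
  have := fd_sum (n+1) (gam n) (by exact_mod_cast gam_degree_lt n)
  exact_mod_cast this

lemma I1V (n : ℕ) : ∑ k ∈ range (n+2), ((-1:ℝ)^k * (((n+1).choose k : ℕ):ℝ)) • eps n k = 0 := by
  apply Subtype.coe_injective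
  push_cast [I1 n]
  rw [← I1 n]
  rfl

lemma evalI1 (n : ℕ) (x : ℝ) :
    ∑ k ∈ range (n+2), ((-1:ℝ)^k * (((n+1).choose k : ℕ):ℝ)) * eval (x + k) (gam n) = 0 := by
  have h := congrArg (eval x) (I1 n)
  rw [eval_finset_sum] at h
  simp only [eval_smul, eval_comp, eval_add, eval_X, eval_C, smul_eq_mul, eval_zero] at h
  exact h

lemma EV (n : ℕ) (χ : ↥(V n) →ₗ[ℝ] ↥(V n) →ₗ[ℝ] ℝ) (hχ : EulerCond n χ) :
    ∀ i j : ℕ, i ≤ n+1 → j ≤ n+1 →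
      χ (eps n i) (eps n j) = eval ((j:ℝ) - (i:ℝ)) (gam n) := by
  intro i j hi hj
  -- step 0
  have step0 : ∀ i j : ℕ, i ≤ n → j ≤ n → χ (eps n i) (eps n j) = eval ((j:ℝ) - (i:ℝ)) (gam n) := by
    intro i j hi hj
    have h := hχ ⟨i, Nat.lt_succ_of_le hi⟩ ⟨j, Nat.lt_succ_of_le hj⟩ (eps n i) (eps n j) rfl rfl
    rw [h]
    exact val_eq n i j hi
  have step1 : ∀ i j : ℕ, i ≤ n → j ≤ n+1 → χ (eps n i) (eps n j) = eval ((j:ℝ) - (i:ℝ)) (gam n) := by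
    intro i j hi hj
    rcases Nat.lt_succ_iff_lt_or_eq.mp (Nat.lt_succ_of_le hj) with hj' | rfl
    · exact step0 i j hi (Nat.lt_succ_iff.mp hj')
    · -- j = n+1
      have hsum := congrArg (χ (eps n i)) (I1V n)
      rw [map_sum, map_zero] at hsum
      simp only [map_smul, smul_eq_mul] at hsum
      have hev := evalI1 n (-(i:ℝ))
      have hev' : ∑ k ∈ range (n+2), ((-1:ℝ)^k * (((n+1).choose k : ℕ):ℝ)) *
          eval ((k:ℝ) - (i:ℝ)) (gam n) = 0 :=
        (Finset.sum_congr rfl fun k _ => by rw [sub_eq_neg_add]).trans hev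
      have hcomb : ∑ k ∈ range (n+2), ((-1:ℝ)^k * (((n+1).choose k : ℕ):ℝ)) *
          (χ (eps n i) (eps n k) - eval ((k:ℝ) - (i:ℝ)) (gam n)) = 0 := by
        have hsplit : ∑ k ∈ range (n+2), ((-1:ℝ)^k * (((n+1).choose k : ℕ):ℝ)) *
            (χ (eps n i) (eps n k) - eval ((k:ℝ) - (i:ℝ)) (gam n))
            = (∑ k ∈ range (n+2), ((-1:ℝ)^k * (((n+1).choose k : ℕ):ℝ)) * χ (eps n i) (eps n k))
              - ∑ k ∈ range (n+2), ((-1:ℝ)^k * (((n+1).choose k : ℕ):ℝ)) *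
                  eval ((k:ℝ) - (i:ℝ)) (gam n) := by
          rw [← Finset.sum_sub_distrib]
          exact Finset.sum_congr rfl fun k _ => mul_sub _ _ _
        rw [hsplit, hsum, hev', sub_zero]
      rw [Finset.sum_range_succ] at hcomb
      rw [Finset.sum_eq_zero (fun k hk => by
        rw [step0 i k hi (Nat.lt_succ_iff.mp (Finset.mem_range.mp hk)), sub_self, mul_zero])] at hcomb
      rw [zero_add] at hcomb
      have hne : ((-1:ℝ)^(n+1) * (((n+1).choose (n+1) : ℕ):ℝ)) ≠ 0 := by
        norm_num [Nat.choose_self]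
      rcases mul_eq_zero.mp hcomb with h | h
      · exact absurd h hne
      · have h' := sub_eq_zero.mp h
        push_cast at h' ⊢
        linarith
  rcases Nat.lt_succ_iff_lt_or_eq.mp (Nat.lt_succ_of_le hi) with hi' | rfl
  · exact step1 i j (Nat.lt_succ_iff.mp hi') hj
  · -- i = n+1
    have hsum := congrArg (fun φ : ↥(V n) →ₗ[ℝ] ℝ => φ (eps n j)) (congrArg χ (I1V n))
    simp only [map_sum, map_smul, map_zero, LinearMap.sum_apply, LinearMap.smul_apply,
      LinearMap.zero_apply, smul_eq_mul] at hsum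
    -- reflected eval identity
    have hev : ∑ k ∈ range (n+2), ((-1:ℝ)^k * (((n+1).choose k : ℕ):ℝ)) *
        eval ((j:ℝ) - (k:ℝ)) (gam n) = 0 := by
      rw [← Finset.sum_range_reflect]
      have h2 := evalI1 n ((j:ℝ) - ((n:ℝ)+1))
      calc ∑ k ∈ range (n+2), ((-1:ℝ)^(n+1-k) * ((((n+1).choose (n+1-k)) : ℕ):ℝ)) *
            eval ((j:ℝ) - ((n+1-k : ℕ):ℝ)) (gam n)
          = (-1:ℝ)^(n+1) * ∑ k ∈ range (n+2), ((-1:ℝ)^k * (((n+1).choose k : ℕ):ℝ)) *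
            eval (((j:ℝ) - ((n:ℝ)+1)) + (k:ℝ)) (gam n) := by
            rw [Finset.mul_sum]
            refine Finset.sum_congr rfl fun k hk => ?_
            have hk' : k ≤ n+1 := Nat.lt_succ_iff.mp (Finset.mem_range.mp hk)
            rw [Nat.choose_symm hk']
            have harg : (↑j : ℝ) - ((n+1-k : ℕ):ℝ) = ((j:ℝ) - ((n:ℝ)+1)) + (k:ℝ) := by
              push_cast [Nat.cast_sub hk']
              ring
            rw [harg]
            have h4 : ((-1:ℝ)^k) * ((-1)^k) = 1 := by
              rw [← pow_add]
              exact Even.neg_one_pow ⟨k, rfl⟩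
            have hsgn : (-1:ℝ)^(n+1-k) = (-1)^(n+1) * (-1)^k := by
              have h5 : n+1-k + k = n+1 := by omega
              calc (-1:ℝ)^(n+1-k) = (-1)^(n+1-k) * ((-1)^k * (-1)^k) := by rw [h4, mul_one]
                _ = ((-1)^(n+1-k) * (-1)^k) * (-1)^k := by ring
                _ = (-1)^(n+1) * (-1)^k := by rw [← pow_add, h5]
            rw [hsgn]
            ring
          _ = 0 := by rw [h2, mul_zero]
    have hcomb : ∑ k ∈ range (n+2), ((-1:ℝ)^k * (((n+1).choose k : ℕ):ℝ)) *
        (χ (eps n k) (eps n j) - eval ((j:ℝ) - (k:ℝ)) (gam n)) = 0 := by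
      have hsplit : ∑ k ∈ range (n+2), ((-1:ℝ)^k * (((n+1).choose k : ℕ):ℝ)) *
          (χ (eps n k) (eps n j) - eval ((j:ℝ) - (k:ℝ)) (gam n))
          = (∑ k ∈ range (n+2), ((-1:ℝ)^k * (((n+1).choose k : ℕ):ℝ)) * χ (eps n k) (eps n j))
            - ∑ k ∈ range (n+2), ((-1:ℝ)^k * (((n+1).choose k : ℕ):ℝ)) *
                eval ((j:ℝ) - (k:ℝ)) (gam n) := by
        rw [← Finset.sum_sub_distrib]
        exact Finset.sum_congr rfl fun k _ => mul_sub _ _ _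
      rw [hsplit, hsum, hev, sub_zero]
    rw [Finset.sum_range_succ] at hcomb
    rw [Finset.sum_eq_zero (fun k hk => by
      rw [step1 k j (Nat.lt_succ_iff.mp (Finset.mem_range.mp hk)) hj, sub_self, mul_zero])] at hcomb
    rw [zero_add] at hcomb
    have hne : ((-1:ℝ)^(n+1) * (((n+1).choose (n+1) : ℕ):ℝ)) ≠ 0 := by
      norm_num [Nat.choose_self]
    rcases mul_eq_zero.mp hcomb with h | h
    · exact absurd h hne
    · have h' := sub_eq_zero.mp h
      push_cast at h' ⊢
      linarith


lemma exp_comp (n : ℕ) (f : ℝ[X]) (hf : f.natDegree ≤ n) (c : ℝ) :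
    f.comp (X + C c) = ∑ j ∈ range (n+1), c^j • hasseDeriv j f := by
  ext m
  rw [← taylor_apply, taylor_coeff, finset_sum_coeff]
  simp only [coeff_smul, smul_eq_mul]
  rw [eval_eq_sum_range' (lt_of_le_of_lt ((natDegree_hasseDeriv_le f m).trans
    ((Nat.sub_le _ _).trans hf)) (Nat.lt_succ_self n))]
  refine Finset.sum_congr rfl fun j _ => ?_
  rw [hasseDeriv_coeff, hasseDeriv_coeff]
  have h1 : (j+m).choose m = (m+j).choose j := by
    rw [Nat.add_comm j m]
    have h2 := Nat.choose_symm (Nat.le_add_right m j)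
    rw [show m + j - m = j by omega] at h2
    exact h2.symm
  rw [h1, Nat.add_comm j m]
  ring

lemma spanV (n : ℕ) :
    Submodule.span ℝ ((fun k : ℕ => eps n k) '' Set.Iic n) = (⊤ : Submodule ℝ (V n)) := by
  apply Submodule.map_injective_of_injective
    (show Function.Injective (V n).subtype from Subtype.coe_injective)
  rw [Submodule.map_span, Submodule.map_subtype_top, Set.image_image]
  have himg : (fun k : ℕ => (V n).subtype (eps n k)) '' Set.Iic n
      = (fun k : ℕ => (gam n).comp (X + C ((0:ℝ) + k))) '' Set.Iic n := by
    apply Set.image_congr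
    intro k _
    simp [eps, zero_add]
  rw [himg, span_gam n 0]
  rfl

noncomputable def ShOp (n : ℕ) (c : ℝ) : Module.End ℝ (V n) :=
  ((Polynomial.aeval (X + C c)).toLinearMap).restrict
    (p := V n) (q := V n) (fun p hp => by
      have h2 : (Polynomial.aeval (X + C c)).toLinearMap p = p.comp (X + C c) := by
        simp [aeval_def, Polynomial.comp]
      rw [h2]
      exact comp_mem_V hp c)

lemma ShOp_apply (n : ℕ) (c : ℝ) (f : V n) :
    (ShOp n c f : ℝ[X]) = (f:ℝ[X]).comp (X + C c) := by
  show (Polynomial.aeval (X + C c)) (f:ℝ[X]) = (f:ℝ[X]).comp (X + C c)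
  simp [aeval_def, Polynomial.comp]

lemma ShOp_eps (n : ℕ) (k : ℕ) : ShOp n 1 (eps n k) = eps n (k+1) := by
  apply Subtype.ext
  rw [ShOp_apply]
  show ((gam n).comp (X + C (k:ℝ))).comp (X + C 1) = (gam n).comp (X + C ((k+1:ℕ):ℝ))
  rw [comp_assoc]
  congr 1
  rw [add_comp, X_comp, C_comp, XCC]
  push_cast
  ring_nf

lemma shift1_inv (n : ℕ) (χ : ↥(V n) →ₗ[ℝ] ↥(V n) →ₗ[ℝ] ℝ) (hχ : EulerCond n χ)
    (f g : V n) : χ (ShOp n 1 f) (ShOp n 1 g) = χ f g := by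
  have hf : f ∈ Submodule.span ℝ ((fun k : ℕ => eps n k) '' Set.Iic n) := by
    rw [spanV]; trivial
  have hg : g ∈ Submodule.span ℝ ((fun k : ℕ => eps n k) '' Set.Iic n) := by
    rw [spanV]; trivial
  induction hf, hg using Submodule.span_induction₂ with
  | mem_mem x y hx hy =>
    obtain ⟨i, hi, rfl⟩ := hx
    obtain ⟨j, hj, rfl⟩ := hy
    rw [ShOp_eps, ShOp_eps, EV n χ hχ (i+1) (j+1) (Nat.succ_le_succ hi) (Nat.succ_le_succ hj),
      EV n χ hχ i j (hi.trans (Nat.le_succ n)) (hj.trans (Nat.le_succ n))]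
    congr 1
    push_cast
    ring
  | zero_left y hy => simp
  | zero_right x hx => simp
  | add_left x y z hx hy hz h1 h2 => simp only [map_add, LinearMap.add_apply, h1, h2]
  | add_right x y z hx hy hz h1 h2 => simp only [map_add, LinearMap.add_apply, h1, h2]
  | smul_left r x y hx hy h => simp only [map_smul, LinearMap.smul_apply, smul_eq_mul, h]
  | smul_right r x y hx hy h => simp only [map_smul, LinearMap.smul_apply, smul_eq_mul, h]

lemma ShOp_nat_succ (n : ℕ) (m : ℕ) (f : V n) :
    ShOp n ((m+1 : ℕ):ℝ) f = ShOp n 1 (ShOp n (m:ℝ) f) := by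
  apply Subtype.ext
  rw [ShOp_apply, ShOp_apply, ShOp_apply, comp_assoc]
  congr 1
  rw [add_comp, X_comp, C_comp, XCC]
  push_cast
  ring_nf

lemma ShOp_zero (n : ℕ) (f : V n) : ShOp n ((0:ℕ):ℝ) f = f := by
  apply Subtype.ext
  rw [ShOp_apply]
  push_cast
  rw [C_0, add_zero, comp_X]

lemma shift_nat_inv (n : ℕ) (χ : ↥(V n) →ₗ[ℝ] ↥(V n) →ₗ[ℝ] ℝ) (hχ : EulerCond n χ)
    (m : ℕ) (f g : V n) : χ (ShOp n (m:ℝ) f) (ShOp n (m:ℝ) g) = χ f g := by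
  induction m with
  | zero => rw [ShOp_zero, ShOp_zero]
  | succ m ih => rw [ShOp_nat_succ, ShOp_nat_succ, shift1_inv n χ hχ, ih]

lemma hasse_mem_V {n : ℕ} {p : ℝ[X]} (hp : p ∈ V n) (j : ℕ) : hasseDeriv j p ∈ V n := by
  rw [V, Polynomial.mem_degreeLT] at hp ⊢
  rcases eq_or_ne (hasseDeriv j p) 0 with h0 | h0
  · rw [h0, degree_zero]
    exact lt_of_le_of_lt bot_le hp
  have hpne : p ≠ 0 := fun h => h0 (by rw [h, map_zero])
  have h1 : (hasseDeriv j p).natDegree ≤ p.natDegree :=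
    (natDegree_hasseDeriv_le p j).trans (Nat.sub_le _ _)
  have h2 : p.natDegree < n + 1 := by
    rw [← natDegree_lt_iff_degree_lt hpne] at hp
    exact hp
  rw [← natDegree_lt_iff_degree_lt h0]
  exact_mod_cast lt_of_le_of_lt h1 h2

noncomputable def hD (n : ℕ) (j : ℕ) (f : V n) : V n := ⟨hasseDeriv j (f:ℝ[X]), hasse_mem_V f.2 j⟩

lemma natDegree_le_of_mem_V {n : ℕ} {p : ℝ[X]} (hp : p ∈ V n) : p.natDegree ≤ n := by
  rw [V, Polynomial.mem_degreeLT] at hp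
  rcases eq_or_ne p 0 with rfl | hpne
  · simp
  rw [← natDegree_lt_iff_degree_lt hpne] at hp
  exact_mod_cast Nat.lt_succ_iff.mp (by exact_mod_cast hp)

lemma ShOp_eq_sum_hD (n : ℕ) (c : ℝ) (f : V n) :
    ShOp n c f = ∑ j ∈ range (n+1), c^j • hD n j f := by
  apply Subtype.ext
  rw [ShOp_apply]
  rw [exp_comp n (f:ℝ[X]) (natDegree_le_of_mem_V f.2) c]
  rw [show ((↑(∑ j ∈ range (n+1), c^j • hD n j f) : ℝ[X]))
      = ∑ j ∈ range (n+1), c^j • (hD n j f : ℝ[X]) by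
    exact_mod_cast congrArg _ rfl]
  rfl

lemma Dop_coe (n : ℕ) (f : V n) : ((Dop n f : V n) : ℝ[X]) = derivative (f : ℝ[X]) := rfl

lemma hD_one (n : ℕ) (f : V n) : hD n 1 f = Dop n f := by
  apply Subtype.ext
  show hasseDeriv 1 (f : ℝ[X]) = _
  rw [hasseDeriv_one', Dop_coe]

lemma hD_zero (n : ℕ) (f : V n) : hD n 0 f = f := by
  apply Subtype.ext
  show hasseDeriv 0 (f : ℝ[X]) = _
  rw [hasseDeriv_zero']

/-- The differentiation operator `D` is antiselfadjoint with respect to the Euler form: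
for all `f, g ∈ V_n`, `χ_n(f′, g) + χ_n(f, g′) = 0`. -/
theorem D_antiselfadjoint (n : ℕ) (χ : ↥(V n) →ₗ[ℝ] ↥(V n) →ₗ[ℝ] ℝ)
    (hχ : EulerCond n χ) (f g : V n) :
    χ (Dop n f) g + χ f (Dop n g) = 0 := by
  rcases n with _ | N
  · -- n = 0 : D = 0
    have hzero : ∀ h : V 0, Dop 0 h = 0 := by
      intro h
      apply Subtype.ext
      rw [Dop_coe]
      have h2 : (h : ℝ[X]) ∈ degreeLT ℝ (0+1) := h.2
      rw [Polynomial.mem_degreeLT] at h2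
      have hh : (h : ℝ[X]).degree ≤ 0 :=
        Nat.WithBot.lt_one_iff_le_zero.mp (by exact_mod_cast h2)
      rw [eq_C_of_degree_le_zero hh]
      simp
    rw [hzero f, hzero g]
    simp
  · have hA : ∀ j k : ℕ, True := fun _ _ => trivial
    set q : ℝ[X] := ∑ j ∈ range (N+2), ∑ k ∈ range (N+2),
      (monomial (j+k) (χ (hD (N+1) j f) (hD (N+1) k g))) with hq
    have claimA : ∀ c : ℝ, eval c q = χ (ShOp (N+1) c f) (ShOp (N+1) c g) := by
      intro c
      rw [ShOp_eq_sum_hD, ShOp_eq_sum_hD, hq]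
      simp only [map_sum, LinearMap.sum_apply, map_smul, LinearMap.smul_apply, smul_eq_mul,
        eval_finset_sum, eval_monomial, Finset.mul_sum]
      rw [Finset.sum_comm]
      refine Finset.sum_congr rfl fun j _ => Finset.sum_congr rfl fun k _ => ?_
      rw [pow_add]
      ring
    have claimB : ∀ m : ℕ, eval ((m:ℕ):ℝ) q = eval ((0:ℕ):ℝ) q := by
      intro m
      rw [claimA, claimA, shift_nat_inv (N+1) χ hχ m, shift_nat_inv (N+1) χ hχ 0]
    have claimC : q = C (eval 0 q) := by
      apply sub_eq_zero.mp
      apply eq_zero_of_infinite_isRoot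
      apply Set.infinite_of_injective_forall_mem
        (f := fun m : ℕ => (m:ℝ)) (hi := Nat.cast_injective)
      intro m
      show IsRoot _ _
      rw [IsRoot, eval_sub, eval_C]
      have hB := claimB m
      rw [Nat.cast_zero] at hB
      rw [hB, sub_self]
    have hcoeff1 : q.coeff 1 = 0 := by
      rw [claimC, coeff_C]
      norm_num
    have hcoeff1' : q.coeff 1
        = χ (hD (N+1) 0 f) (hD (N+1) 1 g) + χ (hD (N+1) 1 f) (hD (N+1) 0 g) := by
      rw [hq, finset_sum_coeff]
      have hinner : ∀ j ∈ range (N+2),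
          (∑ k ∈ range (N+2), (monomial (j+k) (χ (hD (N+1) j f) (hD (N+1) k g)))).coeff 1
          = ∑ k ∈ range (N+2), if j + k = 1 then χ (hD (N+1) j f) (hD (N+1) k g) else 0 := by
        intro j _
        rw [finset_sum_coeff]
        exact Finset.sum_congr rfl fun k _ => coeff_monomial
      rw [Finset.sum_congr rfl hinner]
      rw [← Finset.sum_subset (Finset.range_subset_range.mpr (by omega : 2 ≤ N+2))
        (fun j _ hj => Finset.sum_eq_zero fun k _ => if_neg (by
          rw [Finset.mem_range, not_lt] at hj
          omega))]
      have hinner2 : ∀ j ∈ range 2,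
          (∑ k ∈ range (N+2), if j + k = 1 then χ (hD (N+1) j f) (hD (N+1) k g) else 0)
          = ∑ k ∈ range 2, if j + k = 1 then χ (hD (N+1) j f) (hD (N+1) k g) else 0 := by
        intro j hj
        rw [← Finset.sum_subset (Finset.range_subset_range.mpr (by omega : 2 ≤ N+2))
          (fun k _ hk => if_neg (by
            rw [Finset.mem_range, not_lt] at hk
            omega))]
      rw [Finset.sum_congr rfl hinner2]
      simp [Finset.sum_range_succ]
    rw [← hD_one (N+1) f, ← hD_one (N+1) g]
    nth_rewrite 1 [← hD_zero (N+1) g]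
    nth_rewrite 2 [← hD_zero (N+1) f]
    rw [add_comm, ← hcoeff1', hcoeff1]
end

section
/- A linear endomorphism φ of V_n is an isometry of the Euler form (i.e. χ_n(φf, φg) = χ_n(f, g) for all f, g ∈ V_n) if and only if there exists a real polynomial F(X) = a_0 + a_1X + ⋯ + a_nX^n with F(X)·F(−X) ≡ 1 (mod X^{n+1}) such that φ = F(D) = a_0·id + a_1·D + ⋯ + a_n·D^n. -/
open Polynomial

set_option maxHeartbeats 1000000

namespace EulerIso

variable (n : ℕ)

lemma mem_V {p : ℝ[X]} (h : p.natDegree ≤ n) : p ∈ V n := by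
  rcases eq_or_ne p 0 with rfl | hp
  · exact (V n).zero_mem
  · show p ∈ Polynomial.degreeLT ℝ (n + 1)
    rw [Polynomial.mem_degreeLT]
    exact (Polynomial.natDegree_lt_iff_degree_lt hp).1 (Nat.lt_succ_of_le h)

lemma natDeg_le (g : V n) : (g : ℝ[X]).natDegree ≤ n := by
  have : (g : ℝ[X]) ∈ Polynomial.degreeLT ℝ (n + 1) := g.2
  rw [Polynomial.mem_degreeLT] at this
  rcases eq_or_ne (g : ℝ[X]) 0 with h0 | h0
  · simp [h0]
  · exact Nat.lt_succ_iff.1 ((Polynomial.natDegree_lt_iff_degree_lt h0).2 this)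

lemma gam_natDegree : (gam n).natDegree = n := by
  have hm : (∏ i ∈ Finset.range n, (X + Polynomial.C (i + 1 : ℝ))).Monic :=
    monic_prod_of_monic _ _ fun i _ => monic_X_add_C _
  rw [gam, Polynomial.natDegree_C_mul (by positivity : ((n.factorial : ℝ))⁻¹ ≠ 0)]
  rw [Polynomial.natDegree_prod_of_monic _ _ fun i _ => monic_X_add_C _]
  simp only [Polynomial.natDegree_X_add_C, Finset.sum_const, smul_eq_mul, mul_one,
    Finset.card_range]

lemma gam_coeff : (gam n).coeff n = ((n.factorial : ℝ))⁻¹ := by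
  have hm : (∏ i ∈ Finset.range n, (X + Polynomial.C (i + 1 : ℝ))).Monic :=
    monic_prod_of_monic _ _ fun i _ => monic_X_add_C _
  have hd : (∏ i ∈ Finset.range n, (X + Polynomial.C (i + 1 : ℝ))).natDegree = n := by
    rw [Polynomial.natDegree_prod_of_monic _ _ fun i _ => monic_X_add_C _]
    simp only [Polynomial.natDegree_X_add_C, Finset.sum_const, smul_eq_mul, mul_one,
      Finset.card_range]
  have hl := hm.coeff_natDegree
  rw [hd] at hl
  rw [gam, Polynomial.coeff_C_mul, hl, mul_one]

noncomputable def g0 : V n := ⟨gam n, mem_V n (le_of_eq (gam_natDegree n))⟩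

lemma coe_g0 : ((g0 n : V n) : ℝ[X]) = gam n := rfl

lemma coe_Dop (f : V n) : ((Dop n f : V n) : ℝ[X]) = Polynomial.derivative (f : ℝ[X]) := rfl

lemma coe_Dop_pow (k : ℕ) (f : V n) :
    (((Dop n ^ k) f : V n) : ℝ[X]) = Polynomial.derivative^[k] (f : ℝ[X]) := by
  induction k with
  | zero => simp
  | succ k ih =>
    rw [pow_succ', Module.End.mul_apply, Function.iterate_succ_apply', ← ih]
    rfl

noncomputable def vv (k : ℕ) : V n := (Dop n ^ k) (g0 n)

lemma coe_vv (k : ℕ) : ((vv n k : V n) : ℝ[X]) = Polynomial.derivative^[k] (gam n) :=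
  coe_Dop_pow n k (g0 n)

lemma vv_eq_zero {k : ℕ} (h : n < k) : vv n k = 0 := by
  have : ((vv n k : V n) : ℝ[X]) = 0 := by
    rw [coe_vv]
    exact Polynomial.iterate_derivative_eq_zero (by rw [gam_natDegree]; exact h)
  exact Subtype.ext this

lemma deriv_gam_coeff (k : ℕ) (hk : k ≤ n) :
    (Polynomial.derivative^[k] (gam n)).coeff (n - k) =
      (n.descFactorial k : ℝ) * ((n.factorial : ℝ))⁻¹ := by
  rw [Polynomial.coeff_iterate_derivative, Nat.sub_add_cancel hk, gam_coeff, nsmul_eq_mul]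

lemma deriv_gam_natDegree_le (k : ℕ) :
    (Polynomial.derivative^[k] (gam n)).natDegree ≤ n - k := by
  simpa [gam_natDegree] using Polynomial.natDegree_iterate_derivative (gam n) k

noncomputable def vB : Fin (n + 1) → V n := fun k => vv n (k : ℕ)

instance : Module.Finite ℝ (V n) := Module.Finite.equiv (Polynomial.degreeLTEquiv ℝ (n + 1)).symm

lemma finrank_V : Module.finrank ℝ (V n) = n + 1 := by
  rw [show V n = Polynomial.degreeLT ℝ (n + 1) from rfl,
    (Polynomial.degreeLTEquiv ℝ (n + 1)).finrank_eq]
  simp [Module.finrank_fin_fun]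

lemma li_vB : LinearIndependent ℝ (vB n) := by
  rw [linearIndependent_iff']
  intro s g hsum
  suffices key : ∀ m : ℕ, ∀ i ∈ s, (i : ℕ) = m → g i = 0 by
    exact fun i hi => key i i hi rfl
  intro m
  induction m using Nat.strong_induction_on with
  | _ m IH =>
    intro i hi him
    have hcoeff : ((∑ j ∈ s, g j • vB n j : V n) : ℝ[X]).coeff (n - i) = 0 := by
      rw [hsum]; simp
    rw [AddSubmonoidClass.coe_finset_sum] at hcoeff
    simp only [SetLike.val_smul, Polynomial.finset_sum_coeff, Polynomial.coeff_smul,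
      smul_eq_mul] at hcoeff
    rw [Finset.sum_eq_single i] at hcoeff
    · have hne : ((vB n i : V n) : ℝ[X]).coeff (n - i) ≠ 0 := by
        rw [vB, coe_vv, deriv_gam_coeff n i (Nat.lt_succ_iff.1 i.2)]
        have h1 : n.descFactorial (i:ℕ) ≠ 0 := by
          rw [Ne, Nat.descFactorial_eq_zero_iff_lt, not_lt]
          exact Nat.lt_succ_iff.1 i.2
        have h2 : (n.descFactorial (i:ℕ) : ℝ) ≠ 0 := Nat.cast_ne_zero.2 h1
        have h3 : ((n.factorial : ℝ))⁻¹ ≠ 0 := by positivity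
        exact mul_ne_zero h2 h3
      exact (mul_eq_zero.1 hcoeff).resolve_right hne
    · intro j hj hji
      rcases lt_or_gt_of_ne hji with hlt | hgt
      · rw [IH (j:ℕ) (him ▸ hlt) j hj rfl, zero_mul]
      · have : ((vB n j : V n) : ℝ[X]).coeff (n - i) = 0 := by
          apply Polynomial.coeff_eq_zero_of_natDegree_lt
          calc ((vB n j : V n) : ℝ[X]).natDegree ≤ n - j := by
                rw [vB, coe_vv]; exact deriv_gam_natDegree_le n j
            _ < n - i := by
                have hij : (i:ℕ) < (j:ℕ) := hgt
                have hj' : (j:ℕ) ≤ n := Nat.lt_succ_iff.1 j.2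
                omega
        rw [this, mul_zero]
    · exact fun h => absurd hi h

noncomputable def Bv : Module.Basis (Fin (n + 1)) ℝ (V n) :=
  basisOfLinearIndependentOfCardEqFinrank (li_vB n) (by simp [finrank_V])

lemma Bv_apply (k : Fin (n + 1)) : Bv n k = vB n k := by
  rw [Bv, coe_basisOfLinearIndependentOfCardEqFinrank]
lemma itder_add (k : ℕ) (p q : ℝ[X]) :
    Polynomial.derivative^[k] (p + q) =
      Polynomial.derivative^[k] p + Polynomial.derivative^[k] q := by
  induction k with
  | zero => simp
  | succ k ih => rw [Function.iterate_succ_apply', ih, Polynomial.derivative_add,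
      Function.iterate_succ_apply', Function.iterate_succ_apply']

lemma itder_smul (c : ℝ) (k : ℕ) (p : ℝ[X]) :
    Polynomial.derivative^[k] (c • p) = c • Polynomial.derivative^[k] p :=
  Polynomial.iterate_derivative_smul c p k

noncomputable def chi0 : (V n) →ₗ[ℝ] (V n) →ₗ[ℝ] ℝ :=
  LinearMap.mk₂ ℝ
    (fun f g => ∑ k : Fin (n + 1), (Bv n).repr f k *
      ((-1 : ℝ) ^ (k : ℕ) * (Polynomial.derivative^[(k : ℕ)] (g : ℝ[X])).eval 0))
    (fun f f' g => by
      simp [map_add, add_mul, Finset.sum_add_distrib])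
    (fun c f g => by
      simp only [map_smul, Finsupp.smul_apply, smul_eq_mul, Finset.mul_sum, mul_assoc])
    (fun f g g' => by
      simp only [Submodule.coe_add, itder_add, Polynomial.eval_add, mul_add,
        Finset.sum_add_distrib])
    (fun c f g => by
      simp only [SetLike.val_smul, itder_smul, Polynomial.eval_smul, smul_eq_mul,
        Finset.mul_sum]
      apply Finset.sum_congr rfl
      intro k _
      ring)

lemma chi0_apply (f g : V n) :
    chi0 n f g = ∑ k : Fin (n + 1), (Bv n).repr f k *
      ((-1 : ℝ) ^ (k : ℕ) * (Polynomial.derivative^[(k : ℕ)] (g : ℝ[X])).eval 0) := rfl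

lemma chi0_vv (m : ℕ) (g : V n) :
    chi0 n (vv n m) g = (-1 : ℝ) ^ m * (Polynomial.derivative^[m] (g : ℝ[X])).eval 0 := by
  rcases le_or_gt m n with hm | hm
  · have : vv n m = Bv n ⟨m, Nat.lt_succ_of_le hm⟩ := by rw [Bv_apply]; rfl
    rw [this, chi0_apply, Module.Basis.repr_self]
    rw [Finset.sum_eq_single (⟨m, Nat.lt_succ_of_le hm⟩ : Fin (n + 1))]
    · simp
    · intro j _ hj
      rw [Finsupp.single_apply, if_neg (by exact fun h => hj h.symm), zero_mul]
    · intro h; exact absurd (Finset.mem_univ _) h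
  · rw [vv_eq_zero n hm, map_zero, LinearMap.zero_apply]
    rw [Polynomial.iterate_derivative_eq_zero (lt_of_le_of_lt (natDeg_le n g) hm)]
    simp

lemma Dpow_vB (s : ℕ) (k : Fin (n + 1)) : (Dop n ^ s) (Bv n k) = vv n (s + (k : ℕ)) := by
  rw [Bv_apply]
  show (Dop n ^ s) ((Dop n ^ (k : ℕ)) (g0 n)) = _
  rw [← Module.End.mul_apply, ← pow_add]
  rfl

lemma chi0_Dpow_left (s : ℕ) (f g : V n) :
    chi0 n ((Dop n ^ s) f) g = (-1 : ℝ) ^ s * chi0 n f ((Dop n ^ s) g) := by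
  have hL : chi0 n ((Dop n ^ s) f) g
      = ∑ k : Fin (n + 1), (Bv n).repr f k *
          ((-1 : ℝ) ^ (s + (k : ℕ)) *
            (Polynomial.derivative^[s + (k : ℕ)] (g : ℝ[X])).eval 0) := by
    conv_lhs => rw [← Module.Basis.sum_repr (Bv n) f]
    rw [map_sum, map_sum, LinearMap.sum_apply]
    apply Finset.sum_congr rfl
    intro k _
    rw [map_smul, map_smul, LinearMap.smul_apply, smul_eq_mul]
    rw [Dpow_vB, chi0_vv]
  have hR : chi0 n f ((Dop n ^ s) g)
      = ∑ k : Fin (n + 1), (Bv n).repr f k *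
          ((-1 : ℝ) ^ (k : ℕ) *
            (Polynomial.derivative^[(k : ℕ) + s] (g : ℝ[X])).eval 0) := by
    rw [chi0_apply]
    apply Finset.sum_congr rfl
    intro k _
    rw [coe_Dop_pow, ← Function.iterate_add_apply]
  rw [hL, hR, Finset.mul_sum]
  apply Finset.sum_congr rfl
  intro k _
  rw [add_comm (k : ℕ) s, pow_add]
  ring

lemma aeval_g0 (P : ℝ[X]) :
    (Polynomial.aeval (Dop n) P) (g0 n) = ∑ k : Fin (n + 1), P.coeff k • vB n k := by
  have h1 : (Polynomial.aeval (Dop n) P : Module.End ℝ (V n)) =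
      ∑ k ∈ Finset.range (P.natDegree + 1 + (n + 1)), P.coeff k • (Dop n) ^ k :=
    Polynomial.aeval_eq_sum_range' (n := P.natDegree + 1 + (n + 1)) (by omega) (Dop n)
  rw [h1, LinearMap.sum_apply]
  simp only [LinearMap.smul_apply]
  show ∑ x ∈ Finset.range (P.natDegree + 1 + (n + 1)), P.coeff x • vv n x = _
  have hz : ∀ x ∈ Finset.range (P.natDegree + 1 + (n + 1)), x ∉ Finset.range (n + 1) →
      P.coeff x • vv n x = 0 := by
    intro x _ hx
    rw [Finset.mem_range, not_lt] at hx
    rw [vv_eq_zero n (by omega), smul_zero]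
  rw [← Finset.sum_subset (Finset.range_subset_range.2 (by omega : n + 1 ≤ P.natDegree + 1 + (n + 1))) hz,
    ← Fin.sum_univ_eq_sum_range (fun k => P.coeff k • vv n k) (n + 1)]
  rfl

lemma Dpow_eq_zero {k : ℕ} (h : n < k) : (Dop n) ^ k = 0 := by
  apply LinearMap.ext
  intro f
  apply Subtype.ext
  rw [coe_Dop_pow]
  rw [Polynomial.iterate_derivative_eq_zero (lt_of_le_of_lt (natDeg_le n f) h)]
  simp

lemma aeval_eq_zero_of_dvd {P : ℝ[X]} (h : X ^ (n + 1) ∣ P) :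
    Polynomial.aeval (Dop n) P = 0 := by
  obtain ⟨q, rfl⟩ := h
  rw [map_mul, map_pow, Polynomial.aeval_X, Dpow_eq_zero n (Nat.lt_succ_self n), zero_mul]

lemma mod_eq_mod_iff (a b : ℝ[X]) :
    a %ₘ X ^ (n + 1) = b %ₘ X ^ (n + 1) ↔ X ^ (n + 1) ∣ (a - b) := by
  constructor
  · intro h
    refine ⟨a /ₘ X ^ (n + 1) - b /ₘ X ^ (n + 1), ?_⟩
    have ha := Polynomial.modByMonic_add_div a (X ^ (n + 1))
    have hb := Polynomial.modByMonic_add_div b (X ^ (n + 1))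
    calc a - b = (a %ₘ X ^ (n + 1) + X ^ (n + 1) * (a /ₘ X ^ (n + 1)))
        - (b %ₘ X ^ (n + 1) + X ^ (n + 1) * (b /ₘ X ^ (n + 1))) := by rw [ha, hb]
      _ = X ^ (n + 1) * (a /ₘ X ^ (n + 1) - b /ₘ X ^ (n + 1)) := by rw [h]; ring
  · intro h
    have h0 : (a - b) %ₘ X ^ (n + 1) = 0 :=
      (Polynomial.modByMonic_eq_zero_iff_dvd (Polynomial.monic_X_pow _)).2 h
    rw [Polynomial.sub_modByMonic] at h0
    exact sub_eq_zero.1 h0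

lemma coeff_eq_zero_of_aeval_g0 {P : ℝ[X]}
    (h : (Polynomial.aeval (Dop n) P) (g0 n) = 0) : ∀ k ≤ n, P.coeff k = 0 := by
  rw [aeval_g0] at h
  intro k hk
  exact Fintype.linearIndependent_iff.1 (li_vB n) _ h ⟨k, Nat.lt_succ_of_le hk⟩
lemma taylor_expand {p : ℝ[X]} (hp : p.natDegree ≤ n) (c : ℝ) :
    Polynomial.taylor c p = ∑ k ∈ Finset.range (n + 1),
      (c ^ k / (k.factorial : ℝ)) • Polynomial.derivative^[k] p := by
  apply Polynomial.ext
  intro m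
  have hdeg : (Polynomial.hasseDeriv m p).natDegree < n + 1 :=
    lt_of_le_of_lt (le_trans (Polynomial.natDegree_hasseDeriv_le p m)
      (le_trans (Nat.sub_le _ _) hp)) (Nat.lt_succ_self n)
  rw [Polynomial.taylor_coeff, Polynomial.eval_eq_sum_range' hdeg,
    Polynomial.finset_sum_coeff]
  apply Finset.sum_congr rfl
  intro k _
  rw [Polynomial.hasseDeriv_coeff, Polynomial.coeff_smul,
    Polynomial.coeff_iterate_derivative, Nat.descFactorial_eq_factorial_mul_choose,
    add_comm k m, Nat.choose_symm_add]
  have hk : ((k.factorial : ℝ)) ≠ 0 := Nat.cast_ne_zero.2 (Nat.factorial_ne_zero k)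
  simp only [smul_eq_mul, nsmul_eq_mul, Nat.cast_mul]
  field_simp

lemma eval_taylor_sum {p : ℝ[X]} (hp : p.natDegree ≤ n) (c x : ℝ) :
    p.eval (x + c) = ∑ k ∈ Finset.range (n + 1),
      c ^ k / (k.factorial : ℝ) * (Polynomial.derivative^[k] p).eval x := by
  have h := congrArg (Polynomial.eval x) (taylor_expand n hp c)
  rw [Polynomial.taylor_eval, Polynomial.eval_finset_sum] at h
  simpa only [Polynomial.eval_smul, smul_eq_mul] using h

noncomputable def eP (i : ℕ) : ℝ[X] := (gam n).comp (X + Polynomial.C (i : ℝ))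

lemma eP_natDegree_le (i : ℕ) : (eP n i).natDegree ≤ n := by
  refine le_trans Polynomial.natDegree_comp_le ?_
  rw [gam_natDegree, Polynomial.natDegree_X_add_C, mul_one]

noncomputable def eV (i : Fin (n + 1)) : V n := ⟨eP n (i : ℕ), mem_V n (eP_natDegree_le n _)⟩

lemma eV_expand (i : Fin (n + 1)) :
    eV n i = ∑ k : Fin (n + 1),
      ((((i : ℕ) : ℝ)) ^ (k : ℕ) / ((k : ℕ).factorial : ℝ)) • vB n k := by
  apply Subtype.ext
  rw [AddSubmonoidClass.coe_finset_sum]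
  simp only [SetLike.val_smul]
  show eP n (i : ℕ) = _
  rw [eP, ← Polynomial.taylor_apply, taylor_expand n (le_of_eq (gam_natDegree n)) _,
    ← Fin.sum_univ_eq_sum_range
      (fun k => (((i : ℕ) : ℝ) ^ k / (k.factorial : ℝ)) • Polynomial.derivative^[k] (gam n))
      (n + 1)]
  apply Finset.sum_congr rfl
  intro k _
  congr 1
  exact (coe_vv n (k : ℕ)).symm

lemma eV_repr (i k : Fin (n + 1)) :
    (Bv n).repr (eV n i) k = (((i : ℕ) : ℝ)) ^ (k : ℕ) / ((k : ℕ).factorial : ℝ) := by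
  have : eV n i = ∑ k : Fin (n + 1),
      ((((i : ℕ) : ℝ)) ^ (k : ℕ) / ((k : ℕ).factorial : ℝ)) • Bv n k := by
    rw [eV_expand]
    exact Finset.sum_congr rfl fun k _ => by rw [Bv_apply]
  rw [this, Module.Basis.repr_sum_self]

lemma prod_nat (N d : ℕ) :
    ∏ m ∈ Finset.range N, (d + m + 1) = (d + N).choose N * N.factorial := by
  induction N with
  | zero => simp
  | succ N ih =>
    rw [Finset.prod_range_succ, ih]
    have h := Nat.add_one_mul_choose_eq (d + N) N
    calc (d + N).choose N * N.factorial * (d + N + 1)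
        = (d + N).succ * (d + N).choose N * N.factorial := by
          rw [Nat.succ_eq_add_one]; ring
      _ = (d + N).succ.choose N.succ * N.succ * N.factorial := by rw [h]
      _ = (d + (N + 1)).choose (N + 1) * (N + 1).factorial := by
          simp only [Nat.succ_eq_add_one, Nat.factorial_succ, ← add_assoc]
          ring
  
lemma gam_eval (i j : ℕ) (hi : i ≤ n) :
    (gam n).eval ((j : ℝ) - (i : ℝ)) = ((n + j - i).choose n : ℝ) := by
  rw [gam, Polynomial.eval_mul, Polynomial.eval_C, Polynomial.eval_prod]
  simp only [Polynomial.eval_add, Polynomial.eval_X, Polynomial.eval_C]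
  rcases le_or_gt i j with hij | hij
  · have hd : (j : ℝ) - (i : ℝ) = ((j - i : ℕ) : ℝ) := by rw [Nat.cast_sub hij]
    rw [hd]
    have hp : ∏ x ∈ Finset.range n, (((j - i : ℕ) : ℝ) + ((x : ℝ) + 1))
        = ((((j - i) + n).choose n * n.factorial : ℕ) : ℝ) := by
      rw [← prod_nat n (j - i), Nat.cast_prod]
      exact Finset.prod_congr rfl fun m _ => by push_cast; ring
    rw [hp]
    have hnji : n + j - i = (j - i) + n := by omega
    rw [hnji]
    have hfac : ((n.factorial : ℝ)) ≠ 0 := Nat.cast_ne_zero.2 (Nat.factorial_ne_zero n)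
    push_cast
    field_simp
  · have hmem : i - j - 1 ∈ Finset.range n := Finset.mem_range.2 (by omega)
    have hzero : (j : ℝ) - (i : ℝ) + (((i - j - 1 : ℕ) : ℝ) + 1) = 0 := by
      have h0 : i - j - 1 + (j + 1) = i := by omega
      have h2 := congrArg (fun t : ℕ => (t : ℝ)) h0
      push_cast at h2
      linarith
    rw [Finset.prod_eq_zero hmem hzero, mul_zero,
      Nat.choose_eq_zero_of_lt (by omega : n + j - i < n), Nat.cast_zero]
lemma chi0_eV (i j : Fin (n + 1)) :
    chi0 n (eV n i) (eV n j) = ((n + (j : ℕ) - (i : ℕ)).choose n : ℝ) := by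
  have h1 : chi0 n (eV n i) (eV n j)
      = ∑ k : Fin (n + 1), (((i : ℕ) : ℝ)) ^ (k : ℕ) / ((k : ℕ).factorial : ℝ) *
          ((-1 : ℝ) ^ (k : ℕ) *
            (Polynomial.derivative^[(k : ℕ)] (eP n (j : ℕ))).eval 0) := by
    rw [chi0_apply]
    exact Finset.sum_congr rfl fun k _ => by rw [eV_repr]; rfl
  have h2 : (eP n (j : ℕ)).eval (0 + (-(i : ℝ)))
      = ∑ k ∈ Finset.range (n + 1), (-(i : ℝ)) ^ k / (k.factorial : ℝ) *
          (Polynomial.derivative^[k] (eP n (j : ℕ))).eval 0 :=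
    eval_taylor_sum n (eP_natDegree_le n _) _ _
  rw [h1]
  have h3 : ∑ k : Fin (n + 1), (((i : ℕ) : ℝ)) ^ (k : ℕ) / ((k : ℕ).factorial : ℝ) *
          ((-1 : ℝ) ^ (k : ℕ) *
            (Polynomial.derivative^[(k : ℕ)] (eP n (j : ℕ))).eval 0)
      = (eP n (j : ℕ)).eval (0 + (-(i : ℝ))) := by
    rw [h2, ← Fin.sum_univ_eq_sum_range (fun k => (-(i : ℝ)) ^ k / (k.factorial : ℝ) *
          (Polynomial.derivative^[k] (eP n (j : ℕ))).eval 0) (n + 1)]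
    apply Finset.sum_congr rfl
    intro k _
    rw [neg_pow]
    ring
  rw [h3, eP, Polynomial.eval_comp]
  simp only [Polynomial.eval_add, Polynomial.eval_X, Polynomial.eval_C]
  rw [show (0 : ℝ) + -(i : ℝ) + (j : ℝ) = (j : ℝ) - (i : ℝ) by ring]
  exact gam_eval n (i : ℕ) (j : ℕ) (Nat.lt_succ_iff.1 i.2)

lemma li_eV : LinearIndependent ℝ (eV n) := by
  rw [Fintype.linearIndependent_iff]
  intro g hg
  have h1 : ∀ k : Fin (n + 1),
      ∑ i : Fin (n + 1), g i * ((((i : ℕ) : ℝ)) ^ (k : ℕ) / ((k : ℕ).factorial : ℝ)) = 0 := by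
    intro k
    have h := congrArg (fun x => ((Bv n).repr x) k) hg
    simp only [map_sum, map_smul, Finsupp.coe_finset_sum, Finset.sum_apply,
      Finsupp.coe_smul, Pi.smul_apply, smul_eq_mul, map_zero, Finsupp.coe_zero,
      Pi.zero_apply] at h
    rw [← h]
    exact Finset.sum_congr rfl fun i _ => by rw [eV_repr]
  have h2 : ∀ k : Fin (n + 1), ∑ i : Fin (n + 1), g i * (((i : ℕ) : ℝ)) ^ (k : ℕ) = 0 := by
    intro k
    have hk := h1 k
    have hfac : (((k : ℕ).factorial : ℝ)) ≠ 0 := Nat.cast_ne_zero.2 (Nat.factorial_ne_zero _)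
    have : (∑ i : Fin (n + 1), g i * (((i : ℕ) : ℝ)) ^ (k : ℕ)) / ((k : ℕ).factorial : ℝ)
        = 0 := by
      rw [Finset.sum_div, ← hk]
      exact Finset.sum_congr rfl fun i _ => by ring
    exact (div_eq_zero_iff.1 this).resolve_right hfac
  have hinj : Function.Injective (fun i : Fin (n + 1) => ((i : ℕ) : ℝ)) := by
    intro a b hab
    simp only [Nat.cast_inj] at hab
    exact Fin.ext hab
  have := Matrix.eq_zero_of_forall_pow_sum_mul_pow_eq_zero hinj
    (v := g) (fun k => h2 k)
  exact fun i => congrFun this i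

noncomputable def Be : Module.Basis (Fin (n + 1)) ℝ (V n) :=
  basisOfLinearIndependentOfCardEqFinrank (li_eV n) (by simp [finrank_V])

lemma Be_apply (i : Fin (n + 1)) : Be n i = eV n i := by
  rw [Be, coe_basisOfLinearIndependentOfCardEqFinrank]
lemma chi_eq_chi0 (χ : (V n) →ₗ[ℝ] (V n) →ₗ[ℝ] ℝ) (hχ : EulerCond n χ) : χ = chi0 n := by
  apply LinearMap.ext_basis (Be n) (Be n)
  intro i j
  rw [Be_apply, Be_apply, chi0_eV]
  exact hχ i j (eV n i) (eV n j) rfl rfl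

lemma chi0_right_cancel {x y : V n} (h : ∀ f, chi0 n f x = chi0 n f y) : x = y := by
  have hz : ∀ f, chi0 n f (x - y) = 0 := by
    intro f
    rw [map_sub, h f, sub_self]
  have hc : ∀ k : ℕ, k ≤ n → ((x - y : V n) : ℝ[X]).coeff k = 0 := by
    intro k hk
    have hvz := hz (vv n k)
    rw [chi0_vv] at hvz
    have h0 : (Polynomial.derivative^[k] ((x - y : V n) : ℝ[X])).eval 0 = 0 := by
      rcases mul_eq_zero.1 hvz with h' | h'
      · exact absurd h' (pow_ne_zero _ (by norm_num))
      · exact h'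
    rw [← Polynomial.coeff_zero_eq_eval_zero, Polynomial.coeff_iterate_derivative,
      zero_add, Nat.descFactorial_self, nsmul_eq_mul] at h0
    have hfac : ((k.factorial : ℝ)) ≠ 0 := Nat.cast_ne_zero.2 (Nat.factorial_ne_zero k)
    exact (mul_eq_zero.1 h0).resolve_left hfac
  have hxy : ((x - y : V n) : ℝ[X]) = 0 := by
    apply Polynomial.ext
    intro m
    rw [Polynomial.coeff_zero]
    rcases le_or_gt m n with hm | hm
    · exact hc m hm
    · exact Polynomial.coeff_eq_zero_of_natDegree_lt
        (lt_of_le_of_lt (natDeg_le n _) hm)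
  exact sub_eq_zero.1 (Subtype.ext hxy)

noncomputable def xpow (m : Fin (n + 1)) : V n :=
  ⟨X ^ (m : ℕ), mem_V n (by
    rw [Polynomial.natDegree_X_pow]
    exact Nat.lt_succ_iff.1 m.2)⟩

lemma chi0_left_cancel {x y : V n} (h : ∀ g, chi0 n x g = chi0 n y g) : x = y := by
  apply Module.Basis.ext_elem (Bv n)
  intro m
  have hx := h (xpow n m)
  rw [chi0_apply, chi0_apply] at hx
  have key : ∀ z : V n, ∑ k : Fin (n + 1), (Bv n).repr z k *
      ((-1 : ℝ) ^ (k : ℕ) *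
        (Polynomial.derivative^[(k : ℕ)] ((xpow n m : V n) : ℝ[X])).eval 0)
      = (Bv n).repr z m * ((-1 : ℝ) ^ (m : ℕ) * ((m : ℕ).factorial : ℝ)) := by
    intro z
    rw [Finset.sum_eq_single m]
    · congr 2
      show (Polynomial.derivative^[(m : ℕ)] (X ^ (m : ℕ) : ℝ[X])).eval 0 = _
      rw [Polynomial.iterate_derivative_X_pow_eq_C_mul]
      simp [Nat.descFactorial_self]
    · intro k _ hk
      have hzero : (Polynomial.derivative^[(k : ℕ)] ((xpow n m : V n) : ℝ[X])).eval 0 = 0 := by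
        show (Polynomial.derivative^[(k : ℕ)] (X ^ (m : ℕ) : ℝ[X])).eval 0 = 0
        rw [Polynomial.iterate_derivative_X_pow_eq_C_mul]
        rcases lt_or_gt_of_ne (fun hkm : (k : ℕ) = (m : ℕ) => hk (Fin.ext hkm)) with hlt | hgt
        · simp [zero_pow (by omega : (m : ℕ) - (k : ℕ) ≠ 0)]
        · simp [Nat.descFactorial_eq_zero_iff_lt.2 hgt]
      rw [hzero, mul_zero, mul_zero]
    · intro hm'; exact absurd (Finset.mem_univ _) hm'
  rw [key x, key y] at hx
  have hne : ((-1 : ℝ) ^ (m : ℕ) * ((m : ℕ).factorial : ℝ)) ≠ 0 :=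
    mul_ne_zero (pow_ne_zero _ (by norm_num)) (Nat.cast_ne_zero.2 (Nat.factorial_ne_zero _))
  exact mul_right_cancel₀ hne hx

lemma negD_pow (k : ℕ) : (-(Dop n)) ^ k = ((-1 : ℝ) ^ k) • (Dop n) ^ k := by
  rw [← neg_one_smul ℝ (Dop n), _root_.smul_pow]

lemma chi0_aeval (P : ℝ[X]) (f g : V n) :
    chi0 n ((Polynomial.aeval (Dop n) P) f) g
      = chi0 n f ((Polynomial.aeval (Dop n) (P.comp (-X))) g) := by
  have hR : Polynomial.aeval (Dop n) (P.comp (-(X : ℝ[X]))) = Polynomial.aeval (-(Dop n)) P := by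
    rw [Polynomial.aeval_comp, map_neg, Polynomial.aeval_X]
  rw [hR, Polynomial.aeval_eq_sum_range (x := Dop n), Polynomial.aeval_eq_sum_range (x := -(Dop n))]
  rw [LinearMap.sum_apply, map_sum, LinearMap.sum_apply, LinearMap.sum_apply, map_sum]
  apply Finset.sum_congr rfl
  intro k _
  rw [LinearMap.smul_apply, map_smul, LinearMap.smul_apply, smul_eq_mul,
    negD_pow, LinearMap.smul_apply, LinearMap.smul_apply, map_smul, map_smul,
    smul_eq_mul, smul_eq_mul, chi0_Dpow_left]
lemma gam_reflect :
    (gam n).comp (Polynomial.C (-(n + 1 : ℝ)) - X) = ((-1 : ℝ) ^ n) • gam n := by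
  rw [gam, Polynomial.mul_comp, Polynomial.C_comp, Polynomial.prod_comp]
  have h1 : ∀ i ∈ Finset.range n,
      (X + Polynomial.C ((i : ℝ) + 1)).comp (Polynomial.C (-(n + 1 : ℝ)) - X)
        = -(X + Polynomial.C (((n - 1 - i : ℕ) : ℝ) + 1)) := by
    intro i hi
    rw [Finset.mem_range] at hi
    have hc : (((n - 1 - i : ℕ) : ℝ) + 1) = -(-(n + 1 : ℝ) + ((i : ℝ) + 1)) := by
      have h0 : n - 1 - i + (i + 1) = n := by omega
      have h2 := congrArg (fun t : ℕ => (t : ℝ)) h0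
      push_cast at h2
      linarith
    rw [Polynomial.add_comp, Polynomial.X_comp, Polynomial.C_comp, hc]
    simp only [Polynomial.C_add, Polynomial.C_neg, Polynomial.C_1]
    ring
  rw [Finset.prod_congr rfl h1]
  have h2 : ∏ i ∈ Finset.range n, -(X + Polynomial.C (((n - 1 - i : ℕ) : ℝ) + 1))
      = (-1 : ℝ[X]) ^ n * ∏ i ∈ Finset.range n, (X + Polynomial.C (((n - 1 - i : ℕ) : ℝ) + 1)) := by
    rw [Finset.prod_congr rfl (fun i _ => show
      -(X + Polynomial.C (((n - 1 - i : ℕ) : ℝ) + 1))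
        = (-1 : ℝ[X]) * (X + Polynomial.C (((n - 1 - i : ℕ) : ℝ) + 1)) by ring)]
    rw [Finset.prod_mul_distrib, Finset.prod_const, Finset.card_range]
  rw [h2, Finset.prod_range_reflect (fun j => X + Polynomial.C ((j : ℝ) + 1)) n]
  rw [Polynomial.smul_eq_C_mul, show ((-1 : ℝ[X])) ^ n = Polynomial.C ((-1 : ℝ) ^ n) by
    rw [map_pow, Polynomial.C_neg, map_one]]
  ring

lemma itder_comp_reflect (c : ℝ) (m : ℕ) (p : ℝ[X]) :
    Polynomial.derivative^[m] (p.comp (Polynomial.C c - X))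
      = ((-1 : ℝ) ^ m) • ((Polynomial.derivative^[m] p).comp (Polynomial.C c - X)) := by
  induction m generalizing p with
  | zero => simp
  | succ m ih =>
    rw [Function.iterate_succ_apply, Polynomial.derivative_comp]
    have hd : Polynomial.derivative (Polynomial.C c - X) = -1 := by simp
    rw [hd, neg_one_mul, Polynomial.iterate_derivative_neg, ih,
      Function.iterate_succ_apply, pow_succ]
    rw [mul_comm ((-1 : ℝ) ^ m) (-1 : ℝ), mul_smul, neg_one_smul]

lemma deriv_gam_reflect (m : ℕ) :
    (Polynomial.derivative^[m] (gam n)).eval (-(n + 1 : ℝ))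
      = (-1 : ℝ) ^ (n + m) * (Polynomial.derivative^[m] (gam n)).eval 0 := by
  have h := congrArg (fun p => Polynomial.derivative^[m] p) (gam_reflect n)
  rw [itder_comp_reflect, itder_smul] at h
  have h0 := congrArg (Polynomial.eval 0) h
  simp only [Polynomial.eval_smul, smul_eq_mul, Polynomial.eval_comp,
    Polynomial.eval_sub, Polynomial.eval_C, Polynomial.eval_X, sub_zero] at h0
  have hs : ((-1 : ℝ) ^ m) * ((-1 : ℝ) ^ m) = 1 := by
    rw [← pow_add, ← two_mul, pow_mul]
    norm_num
  calc (Polynomial.derivative^[m] (gam n)).eval (-(n + 1 : ℝ))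
      = ((-1 : ℝ) ^ m * (-1 : ℝ) ^ m) * (Polynomial.derivative^[m] (gam n)).eval (-(n + 1 : ℝ)) := by
        rw [hs, one_mul]
    _ = (-1 : ℝ) ^ m * ((-1 : ℝ) ^ n * (Polynomial.derivative^[m] (gam n)).eval 0) := by
        rw [mul_assoc, h0]
    _ = (-1 : ℝ) ^ (n + m) * (Polynomial.derivative^[m] (gam n)).eval 0 := by
        rw [pow_add]; ring
lemma neg_one_sq_pow (m : ℕ) : ((-1 : ℝ) ^ m) * ((-1 : ℝ) ^ m) = 1 := by
  rw [← pow_add, ← two_mul, pow_mul]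
  norm_num

noncomputable def Ep : ℝ[X] :=
  ∑ k ∈ Finset.range (n + 1), Polynomial.C ((-(n + 1 : ℝ)) ^ k / (k.factorial : ℝ)) * X ^ k

noncomputable def Xi : Module.End ℝ (V n) := Polynomial.aeval (Dop n) (Ep n)

lemma cox_basis (a b : Fin (n + 1)) :
    chi0 n (Bv n b) (Bv n a) = (-1 : ℝ) ^ n * chi0 n (Bv n a) (Xi n (Bv n b)) := by
  have hL : chi0 n (Bv n b) (Bv n a)
      = (-1 : ℝ) ^ (b : ℕ) * (Polynomial.derivative^[(b : ℕ) + (a : ℕ)] (gam n)).eval 0 := by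
    rw [Bv_apply n b]
    show chi0 n (vv n (b : ℕ)) _ = _
    rw [chi0_vv, Bv_apply n a]
    show (-1 : ℝ) ^ (b : ℕ) *
      (Polynomial.derivative^[(b : ℕ)] ((vv n (a : ℕ) : V n) : ℝ[X])).eval 0 = _
    rw [coe_vv, ← Function.iterate_add_apply]
  have hXi : Xi n (Bv n b) = ∑ k ∈ Finset.range (n + 1),
      ((-(n + 1 : ℝ)) ^ k / (k.factorial : ℝ)) • vv n (k + (b : ℕ)) := by
    rw [Xi, Ep, map_sum, LinearMap.sum_apply]
    apply Finset.sum_congr rfl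
    intro k _
    rw [map_mul, Polynomial.aeval_C, map_pow, Polynomial.aeval_X, Module.End.mul_apply,
      Dpow_vB, Module.algebraMap_end_apply]
  have hR : chi0 n (Bv n a) (Xi n (Bv n b))
      = (-1 : ℝ) ^ (a : ℕ) *
          (Polynomial.derivative^[(a : ℕ) + (b : ℕ)] (gam n)).eval (0 + (-(n + 1 : ℝ))) := by
    rw [hXi, map_sum]
    have step : ∀ k ∈ Finset.range (n + 1),
        chi0 n (Bv n a) (((-(n + 1 : ℝ)) ^ k / (k.factorial : ℝ)) • vv n (k + (b : ℕ)))
          = (-1 : ℝ) ^ (a : ℕ) * ((-(n + 1 : ℝ)) ^ k / (k.factorial : ℝ) *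
              (Polynomial.derivative^[k]
                (Polynomial.derivative^[(a : ℕ) + (b : ℕ)] (gam n))).eval 0) := by
      intro k _
      rw [map_smul, smul_eq_mul, Bv_apply n a]
      show ((-(n + 1 : ℝ)) ^ k / (k.factorial : ℝ)) *
        chi0 n (vv n (a : ℕ)) (vv n (k + (b : ℕ))) = _
      rw [chi0_vv, coe_vv, ← Function.iterate_add_apply,
        show (a : ℕ) + (k + (b : ℕ)) = k + ((a : ℕ) + (b : ℕ)) by omega,
        Function.iterate_add_apply]
      ring
    rw [Finset.sum_congr rfl step, ← Finset.mul_sum,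
      ← eval_taylor_sum n (le_trans (deriv_gam_natDegree_le n _) (Nat.sub_le _ _))
        (-(n + 1 : ℝ)) 0]
  rw [hL, hR, zero_add, deriv_gam_reflect,
    show (b : ℕ) + (a : ℕ) = (a : ℕ) + (b : ℕ) from Nat.add_comm _ _]
  have key : (-1 : ℝ) ^ n * ((-1 : ℝ) ^ (a : ℕ) * (-1 : ℝ) ^ (n + ((a : ℕ) + (b : ℕ))))
      = (-1 : ℝ) ^ (b : ℕ) := by
    rw [pow_add, pow_add]
    calc (-1 : ℝ) ^ n * ((-1 : ℝ) ^ (a : ℕ) *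
        ((-1 : ℝ) ^ n * ((-1 : ℝ) ^ (a : ℕ) * (-1 : ℝ) ^ (b : ℕ))))
        = ((-1 : ℝ) ^ n * (-1 : ℝ) ^ n) *
            (((-1 : ℝ) ^ (a : ℕ) * (-1 : ℝ) ^ (a : ℕ)) * (-1 : ℝ) ^ (b : ℕ)) := by ring
      _ = (-1 : ℝ) ^ (b : ℕ) := by rw [neg_one_sq_pow, neg_one_sq_pow, one_mul, one_mul]
  rw [← key]
  ring

lemma cox (f g : V n) : chi0 n g f = (-1 : ℝ) ^ n * chi0 n f (Xi n g) := by
  have hf := Module.Basis.sum_repr (Bv n) f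
  have hg := Module.Basis.sum_repr (Bv n) g
  conv_lhs => rw [← hg, ← hf]
  conv_rhs => rw [← hf, ← hg]
  simp only [map_sum, map_smul, LinearMap.sum_apply, LinearMap.smul_apply, smul_eq_mul,
    Finset.mul_sum]
  rw [Finset.sum_comm]
  apply Finset.sum_congr rfl
  intro a _
  apply Finset.sum_congr rfl
  intro b _
  rw [cox_basis]
  ring
lemma Ep_coeff (k : ℕ) (hk : k ≤ n) :
    (Ep n).coeff k = (-(n + 1 : ℝ)) ^ k / (k.factorial : ℝ) := by
  rw [Ep, Polynomial.finset_sum_coeff, Finset.sum_eq_single k]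
  · rw [Polynomial.coeff_C_mul, Polynomial.coeff_X_pow, if_pos rfl, mul_one]
  · intro j _ hj
    rw [Polynomial.coeff_C_mul, Polynomial.coeff_X_pow, if_neg (fun h => hj h.symm), mul_zero]
  · intro h; exact absurd (Finset.mem_range.2 (by omega)) h

lemma X_dvd_Em1 : (X : ℝ[X]) ∣ (Ep n - 1) := by
  rw [Polynomial.X_dvd_iff, Polynomial.coeff_sub, Ep_coeff n 0 (Nat.zero_le n)]
  simp

lemma Em1_coeff_low {k j : ℕ} (hjk : j < k) : ((Ep n - 1) ^ k).coeff j = 0 :=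
  Polynomial.X_pow_dvd_iff.1 (pow_dvd_pow_of_dvd (X_dvd_Em1 n) k) j hjk

lemma Em1_coeff_diag (k : ℕ) (hk : k ≤ n) :
    ((Ep n - 1) ^ k).coeff k = (-(n + 1 : ℝ)) ^ k := by
  rcases Nat.eq_zero_or_pos k with rfl | hkpos
  · simp
  · have hn1 : 1 ≤ n := le_trans hkpos hk
    obtain ⟨u, hu⟩ := X_dvd_Em1 n
    have hu0 : u.coeff 0 = -(n + 1 : ℝ) := by
      have h1 : (Ep n - 1).coeff 1 = u.coeff 0 := by rw [hu, Polynomial.coeff_X_mul]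
      rw [Polynomial.coeff_sub, Ep_coeff n 1 hn1, Polynomial.coeff_one] at h1
      simp at h1
      rw [← h1]
      norm_num
    rw [hu, mul_pow]
    have : ((X : ℝ[X]) ^ k * u ^ k).coeff (0 + k) = (u ^ k).coeff 0 := by
      rw [Polynomial.coeff_X_pow_mul]
    rw [zero_add] at this
    rw [this, Polynomial.coeff_zero_eq_eval_zero, Polynomial.eval_pow,
      ← Polynomial.coeff_zero_eq_eval_zero, hu0]

lemma negn1_ne : (-(n + 1 : ℝ)) ≠ 0 := by
  have : (0 : ℝ) < (n : ℝ) + 1 := by positivity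
  intro hcontra
  rw [neg_eq_zero] at hcontra
  linarith

lemma Dop_in_N : ∃ P : ℝ[X], Polynomial.aeval (Dop n) (P.comp (Ep n - 1)) = Dop n := by
  have hdiag : ∀ m : ℕ, m ≤ n → ((Ep n - 1) ^ m).coeff m ≠ 0 := fun m hm => by
    rw [Em1_coeff_diag n m hm]
    exact pow_ne_zero _ (negn1_ne n)
  have approx : ∀ m : ℕ, m ≤ n + 1 → ∃ P : ℝ[X],
      ∀ j, j < m → ((X : ℝ[X]) - P.comp (Ep n - 1)).coeff j = 0 := by
    intro m
    induction m with
    | zero => exact fun _ => ⟨0, fun j hj => absurd hj (Nat.not_lt_zero j)⟩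
    | succ m ih =>
      intro hm
      obtain ⟨P, hP⟩ := ih (by omega)
      set d := ((X : ℝ[X]) - P.comp (Ep n - 1)).coeff m with hd
      set e := d / ((Ep n - 1) ^ m).coeff m with he
      refine ⟨P + Polynomial.C e * X ^ m, ?_⟩
      intro j hj
      have hcomp : (Polynomial.C e * X ^ m).comp (Ep n - 1)
          = Polynomial.C e * (Ep n - 1) ^ m := by
        rw [Polynomial.mul_comp, Polynomial.C_comp, Polynomial.X_pow_comp]
      have expand : (X : ℝ[X]) - (P + Polynomial.C e * X ^ m).comp (Ep n - 1)
          = ((X : ℝ[X]) - P.comp (Ep n - 1)) - Polynomial.C e * (Ep n - 1) ^ m := by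
        rw [Polynomial.add_comp, hcomp]
        ring
      rw [expand, Polynomial.coeff_sub, Polynomial.coeff_C_mul]
      rcases Nat.lt_or_ge j m with hjm | hjm
      · rw [hP j hjm, Em1_coeff_low n hjm, mul_zero, sub_zero]
      · have hjm' : j = m := by omega
        subst hjm'
        rw [he, ← hd, div_mul_cancel₀ d (hdiag j (by omega))]
        exact sub_self d
  obtain ⟨P, hP⟩ := approx (n + 1) le_rfl
  refine ⟨P, ?_⟩
  have hdvd : (X : ℝ[X]) ^ (n + 1) ∣ ((X : ℝ[X]) - P.comp (Ep n - 1)) :=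
    Polynomial.X_pow_dvd_iff.2 (fun d hd => hP d hd)
  have h0 := aeval_eq_zero_of_dvd n hdvd
  rw [map_sub, Polynomial.aeval_X] at h0
  exact (sub_eq_zero.1 h0).symm

lemma commute_Dop_of_commute_Xi {φ : Module.End ℝ (V n)} (hco : Commute φ (Xi n)) :
    Commute φ (Dop n) := by
  obtain ⟨P, hP⟩ := Dop_in_N n
  rw [← hP, Polynomial.aeval_comp]
  have hN : Commute φ (Polynomial.aeval (Dop n) (Ep n - 1)) := by
    have hXi1 : Polynomial.aeval (Dop n) (Ep n - 1) = Xi n - 1 := by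
      rw [map_sub, map_one, Xi]
    rw [hXi1]
    exact Commute.sub_right (a := φ) (b := Xi n) (c := 1) hco (Commute.one_right φ)
  rw [Polynomial.aeval_eq_sum_range (x := Polynomial.aeval (Dop n) (Ep n - 1))]
  apply Commute.sum_right
  intro k _
  exact (hN.pow_right k).smul_right _
lemma aeval_F_g0 (c : Fin (n + 1) → ℝ) :
    (Polynomial.aeval (Dop n) (∑ k : Fin (n + 1), Polynomial.C (c k) * X ^ (k : ℕ))) (g0 n)
      = ∑ k : Fin (n + 1), c k • Bv n k := by
  rw [map_sum, LinearMap.sum_apply]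
  apply Finset.sum_congr rfl
  intro k _
  rw [map_mul, Polynomial.aeval_C, map_pow, Polynomial.aeval_X, Module.End.mul_apply,
    Module.algebraMap_end_apply, Bv_apply]
  rfl

lemma degF_le (c : Fin (n + 1) → ℝ) :
    (∑ k : Fin (n + 1), Polynomial.C (c k) * X ^ (k : ℕ)).degree ≤ (n : WithBot ℕ) := by
  apply le_trans (Polynomial.degree_sum_le _ _)
  apply Finset.sup_le
  intro k _
  apply le_trans (Polynomial.degree_C_mul_X_pow_le _ _)
  exact_mod_cast Nat.lt_succ_iff.1 k.2

lemma phi_poly {φ : Module.End ℝ (V n)} (hD : Commute φ (Dop n)) :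
    ∃ F : ℝ[X], F.degree ≤ (n : WithBot ℕ) ∧ φ = Polynomial.aeval (Dop n) F := by
  set F : ℝ[X] := ∑ k : Fin (n + 1),
    Polynomial.C ((Bv n).repr (φ (g0 n)) k) * X ^ (k : ℕ) with hF
  have hFg0 : (Polynomial.aeval (Dop n) F) (g0 n) = φ (g0 n) := by
    rw [hF, aeval_F_g0, Module.Basis.sum_repr]
  refine ⟨F, degF_le n _, ?_⟩
  apply (Bv n).ext
  intro k
  have hDk : φ * (Dop n) ^ (k : ℕ) = (Dop n) ^ (k : ℕ) * φ := (hD.pow_right (k : ℕ)).eq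
  have hFk : Polynomial.aeval (Dop n) F * (Dop n) ^ (k : ℕ)
      = (Dop n) ^ (k : ℕ) * Polynomial.aeval (Dop n) F := by
    have hpow : ((Dop n) ^ (k : ℕ) : Module.End ℝ (V n))
        = Polynomial.aeval (Dop n) ((X : ℝ[X]) ^ (k : ℕ)) := by
      rw [map_pow, Polynomial.aeval_X]
    rw [hpow]
    calc Polynomial.aeval (Dop n) F * Polynomial.aeval (Dop n) ((X : ℝ[X]) ^ (k : ℕ))
        = Polynomial.aeval (Dop n) (F * (X : ℝ[X]) ^ (k : ℕ)) := (map_mul _ _ _).symm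
      _ = Polynomial.aeval (Dop n) ((X : ℝ[X]) ^ (k : ℕ) * F) := by rw [mul_comm]
      _ = Polynomial.aeval (Dop n) ((X : ℝ[X]) ^ (k : ℕ)) * Polynomial.aeval (Dop n) F :=
          map_mul _ _ _
  have hBk : Bv n k = (Dop n ^ (k : ℕ)) (g0 n) := by rw [Bv_apply]; rfl
  rw [hBk, ← Module.End.mul_apply, hDk, ← Module.End.mul_apply, hFk]
  rw [Module.End.mul_apply, Module.End.mul_apply, hFg0]
end EulerIso


/-- A linear endomorphism `φ` of `V_n` is an isometry of the Euler form iff there is a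
real polynomial `F(X) = a₀ + a₁X + ⋯ + aₙXⁿ` with `F(X)·F(−X) ≡ 1 (mod X^{n+1})`
such that `φ = F(D) = a₀·id + a₁·D + ⋯ + aₙ·Dⁿ`. -/
theorem isometry_iff_poly_in_D (n : ℕ) (χ : ↥(V n) →ₗ[ℝ] ↥(V n) →ₗ[ℝ] ℝ)
    (hχ : EulerCond n χ) (φ : Module.End ℝ (V n)) :
    (∀ f g : V n, χ (φ f) (φ g) = χ f g) ↔
      ∃ F : ℝ[X], F.degree ≤ (n : WithBot ℕ) ∧
        (F * F.comp (-Polynomial.X)) %ₘ (Polynomial.X ^ (n + 1)) =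
          (1 : ℝ[X]) %ₘ (Polynomial.X ^ (n + 1)) ∧
        φ = Polynomial.aeval (Dop n) F := by
  have hchi := EulerIso.chi_eq_chi0 n χ hχ
  subst hchi
  constructor
  · intro hiso
    have hinj : Function.Injective φ := by
      rw [← LinearMap.ker_eq_bot, LinearMap.ker_eq_bot']
      intro m hm
      apply EulerIso.chi0_left_cancel n
      intro g
      rw [map_zero, LinearMap.zero_apply]
      have h := hiso m g
      rw [hm, map_zero, LinearMap.zero_apply] at h
      exact h.symm
    have hsurj : Function.Surjective φ := LinearMap.injective_iff_surjective.1 hinj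
    have hXiComm : Commute φ (EulerIso.Xi n) := by
      have hpt : ∀ g, φ (EulerIso.Xi n g) = EulerIso.Xi n (φ g) := by
        intro g
        apply EulerIso.chi0_right_cancel n
        intro f
        obtain ⟨f₀, rfl⟩ := hsurj f
        rw [hiso f₀ (EulerIso.Xi n g)]
        have h1 := EulerIso.cox n f₀ g
        have h2 := EulerIso.cox n (φ f₀) (φ g)
        have h3 : EulerIso.chi0 n (φ g) (φ f₀) = EulerIso.chi0 n g f₀ := hiso g f₀
        have hne : ((-1 : ℝ) ^ n) ≠ 0 := pow_ne_zero _ (by norm_num)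
        have h4 := h1.symm.trans (h3.symm.trans h2)
        exact mul_left_cancel₀ hne h4
      show φ * EulerIso.Xi n = EulerIso.Xi n * φ
      apply LinearMap.ext
      intro g
      rw [Module.End.mul_apply, Module.End.mul_apply, hpt]
    have hD := EulerIso.commute_Dop_of_commute_Xi n hXiComm
    obtain ⟨F, hdeg, hφF⟩ := EulerIso.phi_poly n hD
    refine ⟨F, hdeg, ?_, hφF⟩
    have hop : ∀ g : V n, (Polynomial.aeval (Dop n) (F.comp (-X) * F)) g = g := by
      intro g
      apply EulerIso.chi0_right_cancel n
      intro f
      have h1 := EulerIso.chi0_aeval n F f (Polynomial.aeval (Dop n) F g)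
      have h2 : Polynomial.aeval (Dop n) (F.comp (-X)) ((Polynomial.aeval (Dop n) F) g)
          = Polynomial.aeval (Dop n) (F.comp (-X) * F) g := by
        rw [map_mul, Module.End.mul_apply]
      have h3 : EulerIso.chi0 n ((Polynomial.aeval (Dop n) F) f)
          ((Polynomial.aeval (Dop n) F) g) = EulerIso.chi0 n f g := by
        rw [← hφF]; exact hiso f g
      rw [← h3, h1, h2]
    have hopeq : Polynomial.aeval (Dop n) (F.comp (-X) * F - 1) = 0 := by
      apply LinearMap.ext
      intro g
      rw [map_sub, map_one, LinearMap.sub_apply, Module.End.one_apply, hop, sub_self,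
        LinearMap.zero_apply]
    have hcoeffs := EulerIso.coeff_eq_zero_of_aeval_g0 n
      (show (Polynomial.aeval (Dop n) (F.comp (-X) * F - 1)) (EulerIso.g0 n) = 0 by
        rw [hopeq, LinearMap.zero_apply])
    have hdvd : (X : ℝ[X]) ^ (n + 1) ∣ (F * F.comp (-X) - 1) := by
      rw [show F * F.comp (-X) - 1 = F.comp (-X) * F - 1 by ring]
      exact Polynomial.X_pow_dvd_iff.2 (fun d hd => hcoeffs d (Nat.lt_succ_iff.1 hd))
    exact (EulerIso.mod_eq_mod_iff n _ _).2 hdvd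
  · rintro ⟨F, hdeg, hmod, rfl⟩
    intro f g
    have hdvd := (EulerIso.mod_eq_mod_iff n _ _).1 hmod
    have hone : Polynomial.aeval (Dop n) (F * F.comp (-X)) = 1 := by
      have h0 := EulerIso.aeval_eq_zero_of_dvd n hdvd
      rw [map_sub, map_one, sub_eq_zero] at h0
      exact h0
    have h1 := EulerIso.chi0_aeval n F f (Polynomial.aeval (Dop n) F g)
    rw [h1]
    have h2 : Polynomial.aeval (Dop n) (F.comp (-X)) ((Polynomial.aeval (Dop n) F) g)
        = Polynomial.aeval (Dop n) (F.comp (-X) * F) g := by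
      rw [map_mul, Module.End.mul_apply]
    rw [h2, show F.comp (-X) * F = F * F.comp (-X) from mul_comm _ _, hone,
      Module.End.one_apply]
end
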